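/- Let R be a commutative ring, let x ∈ R be a non-zerodivisor, let J = xR, and let I be an ideal with J ⊆ I and J I^r = I^{r+1} for some integer r ≥ 0. If J^i : I^r = I^i for every integer i with 1 ≤ i ≤ r, then J^i : I^r = I^i for every integer i ≥ 1. -/

import Mathlib

/-!
Since `J * I ^ r = I ^ (r + 1)`, induction gives `J ^ i * I ^ r = I ^ (r + i)`, whence
`I ^ i * I ^ r ≤ J ^ i`, i.e. `I ^ i ≤ J ^ i : I ^ r`, for every `i`. Conversely, for `i > r`
write `J ^ i = x ^ (i - r) J ^ r`. As `x ^ r ∈ I ^ r` and `x` is a non-zerodivisor, an element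
of `J ^ i : I ^ r` is a multiple `x ^ (i - r) c`, and cancelling `x ^ (i - r)` puts `c` in
`J ^ r : I ^ r = I ^ r`. Hence `J ^ i : I ^ r ≤ J ^ (i - r) I ^ r ≤ I ^ i`.
-/

open Ideal

theorem pow_mul_pow_eq_pow_add_of_mul_pow_eq_pow_succ {M : Type*} [CommMonoid M] {a b : M}
    {r : ℕ} (h : a * b ^ r = b ^ (r + 1)) (k : ℕ) : a ^ k * b ^ r = b ^ (r + k) := by
  induction k with
  | zero => simp
  | succ k ih =>
    calc a ^ (k + 1) * b ^ r = a ^ k * (a * b ^ r) := by rw [pow_succ, mul_assoc]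
      _ = a ^ k * b ^ r * b := by rw [h, pow_succ, mul_assoc]
      _ = b ^ (r + (k + 1)) := by rw [ih, ← pow_succ, add_assoc]

namespace Ideal

variable {R : Type*} [CommRing R]

theorem le_colon_iff_mul_le {A B K : Ideal R} : K ≤ A.colon (B : Set R) ↔ K * B ≤ A :=
  ⟨fun h ↦ Submodule.mul_le.2 fun _ hk _ hb ↦ Submodule.mem_colon.1 (h hk) _ hb,
    fun h _ hk ↦ Submodule.mem_colon.2 fun _ hb ↦ h (mul_mem_mul hk hb)⟩

theorem pow_le_colon_pow_of_mul_pow_eq_pow_succ {J I : Ideal R} {r : ℕ}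
    (hred : J * I ^ r = I ^ (r + 1)) (i : ℕ) : I ^ i ≤ (J ^ i).colon ((I ^ r : Ideal R) : Set R) := by
  rw [le_colon_iff_mul_le, ← pow_add, add_comm,
    ← pow_mul_pow_eq_pow_add_of_mul_pow_eq_pow_succ hred i]
  exact mul_le_left

theorem mul_mem_colon_span_singleton_mul_iff {w : R} (hw : w ∈ nonZeroDivisors R)
    {A : Ideal R} {S : Set R} {c : R} :
    w * c ∈ (span {w} * A).colon S ↔ c ∈ A.colon S := by
  simp only [Submodule.mem_colon, smul_eq_mul, mem_span_singleton_mul]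
  refine forall₂_congr fun s _ ↦ ⟨fun ⟨a, ha, hwa⟩ ↦ ?_, fun hcs ↦ ⟨c * s, hcs, by ring⟩⟩
  have : a = c * s := (mul_cancel_left_mem_nonZeroDivisors hw).1 (by rw [hwa]; ring)
  rwa [← this]

theorem span_singleton_mul_colon_le {w s : R} (hw : w ∈ nonZeroDivisors R)
    (hs : s ∈ nonZeroDivisors R) {A : Ideal R} (hA : A ≤ span {s}) {S : Set R} (hsS : s ∈ S) :
    (span {w} * A).colon S ≤ span {w} * A.colon S := by
  intro z hz
  have hzs : z * s ∈ span {w * s} := by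
    rw [← span_singleton_mul_span_singleton]
    exact mul_mono_right hA (Submodule.mem_colon.1 hz s hsS)
  obtain ⟨c, hc⟩ := mem_span_singleton'.1 hzs
  have hz_eq : z = w * c :=
    (mul_cancel_right_mem_nonZeroDivisors hs).1 (by rw [← hc]; ring)
  subst hz_eq
  exact mem_span_singleton_mul.2 ⟨c, (mul_mem_colon_span_singleton_mul_iff hw).1 hz, rfl⟩

end Ideal

/-- **Corollary 4.4, (5) ⟹ (4)**: Let `R` be a commutative ring, `x` a non-zerodivisor,
`J = xR ⊆ I`, and `J I^r = I^(r+1)` for some `r ≥ 0`.  If `(J^i : I^r) = I^i` for all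
`1 ≤ i ≤ r`, then `(J^i : I^r) = I^i` for all `i ≥ 1`. -/
theorem colon_pow_eq_pow_of_le_r
    {R : Type*} [CommRing R] (x : R) (hx : x ∈ nonZeroDivisors R)
    (J : Ideal R) (hJ : J = Ideal.span {x}) (I : Ideal R) (hJI : J ≤ I)
    (r : ℕ) (hred : J * I ^ r = I ^ (r + 1))
    (hcol : ∀ i : ℕ, 1 ≤ i → i ≤ r → Submodule.colon (J ^ i) ((I ^ r : Ideal R) : Set R) = I ^ i) :
    ∀ i : ℕ, 1 ≤ i → Submodule.colon (J ^ i) ((I ^ r : Ideal R) : Set R) = I ^ i := by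
  intro i hi
  rcases le_or_gt i r with hir | hri
  · exact hcol i hi hir
  have hcol_r : (J ^ r).colon ((I ^ r : Ideal R) : Set R) = I ^ r := by
    rcases Nat.eq_zero_or_pos r with rfl | hr
    · simp
    · exact hcol r hr le_rfl
  have hxI : x ∈ I := hJI (hJ ▸ mem_span_singleton_self x)
  have hJi : J ^ i = span {x ^ (i - r)} * J ^ r := by
    rw [hJ, span_singleton_pow, span_singleton_pow, span_singleton_mul_span_singleton, ← pow_add,
      Nat.sub_add_cancel hri.le]
  refine le_antisymm ?_ (pow_le_colon_pow_of_mul_pow_eq_pow_succ hred i)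
  calc (J ^ i).colon ((I ^ r : Ideal R) : Set R)
      ≤ span {x ^ (i - r)} * (J ^ r).colon ((I ^ r : Ideal R) : Set R) := by
        rw [hJi]
        exact span_singleton_mul_colon_le (pow_mem hx _) (pow_mem hx r)
          (by rw [hJ, span_singleton_pow]) (pow_mem_pow hxI r)
    _ = span {x ^ (i - r)} * I ^ r := by rw [hcol_r]
    _ ≤ I ^ (i - r) * I ^ r := mul_mono_left (span_le.2 <| by simpa using pow_mem_pow hxI _)
    _ = I ^ i := by rw [← pow_add, Nat.sub_add_cancel hri.le]
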